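/- arXiv:1604.05806 — 3 statements merged into one kernel-verified Lean document; each statement's English description precedes it below -/
import Mathlib

section
/- For all integers N ≥ 0, r with 1 ≤ r ≤ N+1, and i with 0 ≤ i ≤ r, the polynomials a_{i,r−i}(N+1,x) have the closed form a_{i,r−i}(N+1,x) = (−1)^{N+1+i−r} · i! · S_{1,i−1}(r−i) · N! · H_{N,r−1} · (x)_{r−i}. -/
open Finset

/-- Generalized Changhee power sums with shifted index: `genChangheeS j N = S_{1,j-1}(N)`,
so that `genChangheeS 0 N = S_{1,-1}(N) = 1`, `genChangheeS 1 N = S_{1,0}(N) = N + 1`,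
and `genChangheeS (j+2) N = S_{1,j+1}(N) = ∑_{l=0}^{N} S_{1,j}(l)`. -/
def genChangheeS : ℕ → ℕ → ℚ
  | 0, _ => 1
  | 1, N => N + 1
  | (j+2), N => ∑ l ∈ Finset.range (N+1), genChangheeS (j+1) l

/-- Generalized harmonic numbers `H_{N,j}`: `H_{N,0} = 1`,
`H_{N,1} = 1 + 1/2 + ⋯ + 1/N`, and `H_{N,j} = ∑_{l=j}^{N} H_{l-1,j-1}/l` for `j ≥ 2`. -/
def genHarmonic : ℕ → ℕ → ℚ
  | _, 0 => 1
  | N, 1 => ∑ i ∈ Finset.range N, (1 : ℚ) / (i + 1)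
  | N, (j+2) => ∑ l ∈ Finset.Icc (j+2) N, genHarmonic (l-1) (j+1) / l
termination_by N j => j

/-- Falling factorial `(x)_n = x(x-1)⋯(x-n+1)`, with `(x)_0 = 1`. -/
noncomputable def fallingFactorial (x : ℝ) (n : ℕ) : ℝ := ∏ i ∈ Finset.range n, (x - i)

/-- The coefficients `a_{i,j}(N, x)` arising from repeated differentiation of the
λ-Changhee generating function: `a_{0,0}(N,x) = 0`, `a_{1,0}(1,x) = -1`, `a_{0,1}(1,x) = x`,
and for `N ≥ 1`, `i, j ≥ 0` with `1 ≤ i + j ≤ N + 1`,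
`a_{i,j}(N+1,x) = -N·a_{i,j}(N,x) - i·a_{i-1,j}(N,x) + (x - j + 1)·a_{i,j-1}(N,x)`,
with the convention that `a_{i,j}(N,x) = 0` whenever `i < 0`, `j < 0`, or `i + j > N`. -/
noncomputable def aCh : ℕ → ℤ → ℤ → ℝ → ℝ
  | 0, _, _, _ => 0
  | 1, i, j, x => if i = 1 ∧ j = 0 then -1 else if i = 0 ∧ j = 1 then x else 0
  | (N+2), i, j, x =>
      if 0 ≤ i ∧ 0 ≤ j ∧ 1 ≤ i + j ∧ i + j ≤ N + 2 then
        -(N+1 : ℝ) * aCh (N+1) i j x - (i : ℝ) * aCh (N+1) (i-1) j x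
          + (x - (j : ℝ) + 1) * aCh (N+1) i (j-1) x
      else 0

open Nat

/-! `N! · H_{N,k}` is the unsigned Stirling number of the first kind `[N+1, k+1]`, since both obey
`c(N+1, k+1) = N·c(N, k+1) + c(N, k)`, and `S_{1,i-1}(m) = (m+i).choose i` by the hockey-stick
identity. The claim is therefore `a_{i,m}(n, x) = (-1)^(n+m) [n, i+m] (i+m)!/m! (x)_m`, which is
checked against the defining recurrence: the neighbours `a_{i-1,m}` and `a_{i,m-1}` contribute
`i` and `m` times the same term, together `i + m` times it, and the Stirling recurrence closes
the induction on `n`. -/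

theorem genChangheeS_eq_choose : ∀ i m : ℕ, genChangheeS i m = (m + i).choose i
  | 0, _ => by simp [genChangheeS]
  | 1, m => by simp [genChangheeS]
  | j + 2, m => by
    rw [genChangheeS]
    simp_rw [genChangheeS_eq_choose (j + 1)]
    exact_mod_cast Nat.sum_range_add_choose m (j + 1)

theorem genHarmonic_eq_zero_of_lt {N j : ℕ} (h : N < j) : genHarmonic N j = 0 := by
  match j, h with
  | 1, _ =>
    obtain rfl : N = 0 := by omega
    simp [genHarmonic]
  | j + 2, _ => simp [genHarmonic, Finset.Icc_eq_empty_of_lt (show N < j + 2 by omega)]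

theorem genHarmonic_succ_succ (N j : ℕ) :
    genHarmonic (N + 1) (j + 1) = genHarmonic N (j + 1) + genHarmonic N j / (N + 1) := by
  match j with
  | 0 => simp [genHarmonic, Finset.sum_range_succ]
  | j + 1 =>
    rcases le_or_gt (j + 2) (N + 1) with h | h
    · rw [genHarmonic.eq_3, Finset.sum_Icc_succ_top h, genHarmonic.eq_3]
      push_cast
      simp
    · simp [genHarmonic_eq_zero_of_lt, h, show N < j + 1 by omega, show N < j + 2 by omega]

theorem factorial_mul_genHarmonic (N j : ℕ) :
    (N ! : ℚ) * genHarmonic N j = stirlingFirst (N + 1) (j + 1) := by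
  induction N generalizing j with
  | zero =>
    cases j with
    | zero => simp [genHarmonic, stirlingFirst]
    | succ j => simp [genHarmonic_eq_zero_of_lt, stirlingFirst_eq_zero_of_lt]
  | succ N ih =>
    cases j with
    | zero => simp [genHarmonic, stirlingFirst_one_right]
    | succ j =>
      rw [genHarmonic_succ_succ, stirlingFirst_succ_succ, Nat.cast_add, Nat.cast_mul, ← ih, ← ih,
        factorial_succ]
      push_cast
      field_simp

theorem fallingFactorial_succ (x : ℝ) (n : ℕ) :
    fallingFactorial x (n + 1) = fallingFactorial x n * (x - n) :=
  Finset.prod_range_succ _ _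

theorem aCh_of_neg_right (n : ℕ) (i : ℤ) {j : ℤ} (hj : j < 0) (x : ℝ) : aCh n i j x = 0 := by
  match n with
  | 0 => rfl
  | 1 => rw [aCh, if_neg (by omega), if_neg (by omega)]
  | n + 2 => rw [aCh, if_neg (by omega)]

theorem aCh_one_eq_stirlingFirst (i m : ℕ) (x : ℝ) :
    aCh 1 i m x = (-1) ^ (1 + m) * stirlingFirst 1 (i + m) * ((i + m)! / m ! : ℝ) *
      fallingFactorial x m := by
  rcases lt_trichotomy (i + m) 1 with h | h | h
  · obtain ⟨rfl, rfl⟩ : i = 0 ∧ m = 0 := by omega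
    simp [aCh]
  · rcases (by omega : i = 1 ∧ m = 0 ∨ i = 0 ∧ m = 1) with ⟨rfl, rfl⟩ | ⟨rfl, rfl⟩ <;>
      simp [aCh, fallingFactorial, stirlingFirst_self]
  · rw [stirlingFirst_eq_zero_of_lt h, aCh, if_neg (by omega), if_neg (by omega)]
    simp

theorem aCh_eq_stirlingFirst (N i m : ℕ) (x : ℝ) :
    aCh (N + 1) i m x = (-1) ^ (N + 1 + m) * stirlingFirst (N + 1) (i + m) *
      ((i + m)! / m ! : ℝ) * fallingFactorial x m := by
  induction N generalizing i m with
  | zero => exact aCh_one_eq_stirlingFirst i m x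
  | succ N ih =>
    rw [aCh]
    split_ifs with h
    · obtain ⟨q, hq⟩ : ∃ q, i + m = q + 1 := ⟨i + m - 1, by omega⟩
      have termI : ((i : ℤ) : ℝ) * aCh (N + 1) ((i : ℤ) - 1) m x = (-1) ^ (N + 1 + m) *
          stirlingFirst (N + 1) q * (i * q ! / m ! : ℝ) * fallingFactorial x m := by
        cases i with
        | zero => simp
        | succ k =>
          rw [show ((k + 1 : ℕ) : ℤ) - 1 = k by omega, ih, show k + m = q by omega]
          push_cast
          ring
      have termJ : (x - ((m : ℤ) : ℝ) + 1) * aCh (N + 1) i ((m : ℤ) - 1) x = (-1) ^ (N + m) *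
          stirlingFirst (N + 1) q * (m * q ! / m ! : ℝ) * fallingFactorial x m := by
        cases m with
        | zero => simp [aCh_of_neg_right]
        | succ l =>
          rw [show ((l + 1 : ℕ) : ℤ) - 1 = l by omega, ih, show i + l = q by omega,
            fallingFactorial_succ, factorial_succ]
          push_cast
          field_simp
          ring
      have hq' : (i : ℝ) + m = q + 1 := by exact_mod_cast hq
      rw [ih, termI, termJ, hq, stirlingFirst_succ_succ (N + 1) q, factorial_succ q]
      push_cast
      linear_combination (-1) ^ (N + m) * (stirlingFirst (N + 1) q : ℝ) * (q ! / m ! : ℝ) *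
        fallingFactorial x m * hq'
    · rcases (by omega : i + m = 0 ∨ N + 2 < i + m) with h0 | hlt
      · simp [h0]
      · simp [stirlingFirst_eq_zero_of_lt hlt]

/-- Closed form for all the coefficients `a_{i,r-i}(N+1,x)`:
`a_{i,r-i}(N+1,x) = (-1)^{N+1+i-r} · i! · S_{1,i-1}(r-i) · N! · H_{N,r-1} · (x)_{r-i}`. -/
theorem aCh_closed_form (N r i : ℕ) (hr1 : 1 ≤ r) (hr2 : r ≤ N + 1) (hi : i ≤ r) (x : ℝ) :
    aCh (N + 1) (i : ℤ) ((r : ℤ) - (i : ℤ)) x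
      = (-1 : ℝ) ^ (N + 1 + i - r) * (Nat.factorial i : ℝ) *
          (genChangheeS i (r - i) : ℝ) * (Nat.factorial N : ℝ) *
          (genHarmonic N (r - 1) : ℝ) * fallingFactorial x (r - i) := by
  obtain ⟨m, rfl⟩ : ∃ m, r = i + m := ⟨r - i, by omega⟩
  have sign : (-1 : ℝ) ^ (N + 1 + m) = (-1) ^ (N + 1 + i - (i + m)) := by
    rw [show N + 1 + m = N + 1 + i - (i + m) + 2 * m by omega, pow_add, pow_mul, neg_one_sq,
      one_pow, mul_one]
  have harmonic : (N ! : ℝ) * genHarmonic N (i + m - 1) = stirlingFirst (N + 1) (i + m) := by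
    rw [← Nat.sub_add_cancel hr1]
    exact_mod_cast factorial_mul_genHarmonic N (i + m - 1)
  have changhee : (i ! : ℝ) * genChangheeS i m = (i + m)! / m ! := by
    rw [eq_div_iff (by positivity), genChangheeS_eq_choose, add_comm i m,
      ← add_choose_mul_factorial_mul_factorial m i]
    push_cast
    ring
  rw [show ((i + m : ℕ) : ℤ) - i = m by push_cast; ring, aCh_eq_stirlingFirst,
    Nat.add_sub_cancel_left, sign, ← harmonic, ← changhee]
  ring
end

section
/- For all integers N and r with 2 ≤ r ≤ N, the coefficients a_{r,0} satisfy the unrolled recursion a_{r,0}(N+1,x) = −r · Σ_{i=0}^{N−r+1} (−1)^i (N)_i · a_{r−1,0}(N−i,x), where (N)_i = N(N−1)⋯(N−i+1). -/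
open Finset

/-!
On the column `j = 0` the recursion loses its third term, leaving the two-term recursion
`a_{r,0}(N+1) = -N·a_{r,0}(N) - r·a_{r-1,0}(N)`. Iterating it in the first term multiplies by
`-N, -(N-1), …`, producing the signed falling factorials, and the iteration stops at
`a_{r,0}(r-1) = 0`.
-/

theorem fallingFactorial_zero (x : ℝ) : fallingFactorial x 0 = 1 :=
  prod_range_zero _

theorem fallingFactorial_add_one_succ (x : ℝ) (n : ℕ) :
    fallingFactorial (x + 1) (n + 1) = (x + 1) * fallingFactorial x n := by
  rw [fallingFactorial, fallingFactorial, prod_range_succ', mul_comm]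
  congr 1
  · simp
  · refine prod_congr rfl fun i _ => ?_
    push_cast
    ring

theorem aCh_neg_one (N : ℕ) (i : ℤ) (x : ℝ) : aCh N i (-1) x = 0 := by
  match N with
  | 0 => simp [aCh]
  | 1 => simp [aCh]
  | N + 2 =>
    rw [aCh, if_neg]
    rintro ⟨-, h, -, -⟩
    omega

theorem aCh_zero_of_lt {N : ℕ} {i : ℤ} (h : (N : ℤ) < i) (x : ℝ) : aCh N i 0 x = 0 := by
  match N with
  | 0 => simp [aCh]
  | 1 =>
    rw [aCh, if_neg, if_neg] <;>
    · rintro ⟨h1, -⟩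
      omega
  | N + 2 =>
    rw [aCh, if_neg]
    rintro ⟨-, -, -, h'⟩
    push_cast at h
    omega

theorem aCh_add_two_zero {N : ℕ} {i : ℤ} (h1 : 1 ≤ i) (h2 : i ≤ N + 2) (x : ℝ) :
    aCh (N + 2) i 0 x = -((N : ℝ) + 1) * aCh (N + 1) i 0 x - i * aCh (N + 1) (i - 1) 0 x := by
  rw [aCh, if_pos (by omega), zero_sub, aCh_neg_one]
  ring

/-- The theorem reindexed by `r = k + 1`, `N = k + s`, which avoids truncated subtraction. -/
theorem aCh_succ_zero_eq_sum {k : ℕ} (hk : 1 ≤ k) (s : ℕ) (x : ℝ) :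
    aCh (k + s + 1) (k + 1 : ℕ) 0 x = -((k : ℝ) + 1) *
      ∑ i ∈ range (s + 1), (-1 : ℝ) ^ i * fallingFactorial (k + s : ℕ) i * aCh (k + s - i) k 0 x := by
  induction s with
  | zero =>
    obtain ⟨m, rfl⟩ : ∃ m, k = m + 1 := ⟨k - 1, by omega⟩
    rw [sum_range_one, pow_zero, fallingFactorial_zero, add_zero, Nat.sub_zero,
      aCh_add_two_zero (by omega) (by omega), aCh_zero_of_lt (by omega)]
    push_cast
    rw [add_sub_cancel_right]
    ring
  | succ s ih =>
    have shift : ∀ i ∈ range (s + 1),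
        (-1 : ℝ) ^ (i + 1) * fallingFactorial (k + (s + 1) : ℕ) (i + 1) *
            aCh (k + (s + 1) - (i + 1)) k 0 x
          = -((k + s : ℕ) + 1) *
            ((-1 : ℝ) ^ i * fallingFactorial (k + s : ℕ) i * aCh (k + s - i) k 0 x) := by
      intro i _
      rw [← add_assoc, Nat.cast_succ, fallingFactorial_add_one_succ, Nat.add_sub_add_right]
      ring
    rw [show k + (s + 1) + 1 = k + s + 2 from rfl, aCh_add_two_zero (by omega) (by omega), ih,
      sum_range_succ' _ (s + 1), sum_congr rfl shift, ← mul_sum, pow_zero, fallingFactorial_zero,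
      Nat.sub_zero, ← add_assoc, Nat.cast_succ, Int.cast_add, add_sub_cancel_right]
    push_cast
    ring

/-- Unrolled recursion: for `2 ≤ r ≤ N`,
`a_{r,0}(N+1,x) = -r · ∑_{i=0}^{N-r+1} (-1)^i (N)_i · a_{r-1,0}(N-i,x)`. -/
theorem aCh_r_zero_unrolled (N r : ℕ) (hr1 : 2 ≤ r) (hr2 : r ≤ N) (x : ℝ) :
    aCh (N + 1) (r : ℤ) 0 x
      = -(r : ℝ) *
          ∑ i ∈ Finset.range (N - r + 2),
            (-1 : ℝ) ^ i * fallingFactorial (N : ℝ) i * aCh (N - i) ((r : ℤ) - 1) 0 x := by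
  obtain ⟨k, rfl⟩ : ∃ k, r = k + 1 := ⟨r - 1, by omega⟩
  obtain ⟨s, rfl⟩ : ∃ s, N = k + s := ⟨N - k, by omega⟩
  rw [aCh_succ_zero_eq_sum (by omega), show k + s - (k + 1) + 2 = s + 1 by omega]
  push_cast
  rw [add_sub_cancel_right]
end

section
/- For every integer N ≥ 2, a_{2,1}(N+1,x) = 6·x·(−1)^N·N!·H_{N,2}. -/
open Finset

/-! The recurrence for `a_{i,j}` holds verbatim for all integer indices, since both sides vanish
outside the range where it is imposed. Solving it successively for `(i, j) = (1,0), (0,1), (2,0),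
(1,1), (2,1)` gives each coefficient as `(-1)^N N!` times a polynomial in `x` and harmonic numbers,
and the induction steps close by `H_{N+1} = H_N + 1/(N+1)` and
`H_{N+1,2} = H_{N,2} + H_N/(N+1)`. -/

open scoped Nat

theorem genHarmonic_one_succ (N : ℕ) :
    genHarmonic (N + 1) 1 = genHarmonic N 1 + 1 / (N + 1) := by
  simp [genHarmonic, Finset.sum_range_succ]

theorem genHarmonic_two_succ (N : ℕ) :
    genHarmonic (N + 1) 2 = genHarmonic N 2 + genHarmonic N 1 / (N + 1) := by
  rcases Nat.eq_zero_or_pos N with rfl | hN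
  · simp [genHarmonic]
  · rw [genHarmonic, genHarmonic, Finset.sum_Icc_succ_top (by omega)]
    simp [genHarmonic]

theorem aCh_eq_zero_of_neg_left (N : ℕ) {i : ℤ} (j : ℤ) (x : ℝ) (hi : i < 0) :
    aCh N i j x = 0 := by
  match N with
  | 0 => rfl
  | 1 => rw [aCh, if_neg (by omega), if_neg (by omega)]
  | N + 2 => rw [aCh, if_neg (by omega)]

theorem aCh_eq_zero_of_neg_right (N : ℕ) (i : ℤ) {j : ℤ} (x : ℝ) (hj : j < 0) :
    aCh N i j x = 0 := by
  match N with
  | 0 => rfl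
  | 1 => rw [aCh, if_neg (by omega), if_neg (by omega)]
  | N + 2 => rw [aCh, if_neg (by omega)]

theorem aCh_zero_zero (N : ℕ) (x : ℝ) : aCh N 0 0 x = 0 := by
  match N with
  | 0 => rfl
  | 1 => simp [aCh]
  | N + 2 => rw [aCh, if_neg (by omega)]

theorem aCh_eq_zero_of_lt_add (N : ℕ) (i j : ℤ) (x : ℝ) (h : (N : ℤ) < i + j) :
    aCh N i j x = 0 := by
  induction N generalizing i j with
  | zero => rfl
  | succ N ih =>
    match N with
    | 0 => rw [aCh, if_neg (by omega), if_neg (by omega)]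
    | N + 1 =>
      rw [aCh]
      split_ifs
      · push_cast at h ih
        rw [ih i j (by omega), ih (i - 1) j (by omega), ih i (j - 1) (by omega)]
        ring
      · rfl

theorem aCh_succ_succ (N : ℕ) (i j : ℤ) (x : ℝ) :
    aCh (N + 2) i j x = -(N + 1 : ℝ) * aCh (N + 1) i j x - (i : ℝ) * aCh (N + 1) (i - 1) j x
      + (x - (j : ℝ) + 1) * aCh (N + 1) i (j - 1) x := by
  rw [aCh]
  split_ifs with h
  · rfl
  · obtain hi | hj | ⟨rfl, rfl⟩ | hlt :
        i < 0 ∨ j < 0 ∨ (i = 0 ∧ j = 0) ∨ (N : ℤ) + 2 < i + j := by omega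
    · rw [aCh_eq_zero_of_neg_left _ _ _ hi, aCh_eq_zero_of_neg_left _ _ _ (by omega : i - 1 < 0),
        aCh_eq_zero_of_neg_left _ _ _ hi]
      ring
    · rw [aCh_eq_zero_of_neg_right _ _ _ hj, aCh_eq_zero_of_neg_right _ _ _ hj,
        aCh_eq_zero_of_neg_right _ _ _ (by omega : j - 1 < 0)]
      ring
    · rw [aCh_zero_zero, aCh_eq_zero_of_neg_right _ _ _ (by omega : (0 : ℤ) - 1 < 0)]
      ring
    · rw [aCh_eq_zero_of_lt_add _ _ _ _ (by omega), aCh_eq_zero_of_lt_add _ _ _ _ (by omega),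
        aCh_eq_zero_of_lt_add _ _ _ _ (by omega)]
      ring

theorem aCh_one_zero (N : ℕ) (x : ℝ) : aCh (N + 1) 1 0 x = (-1) ^ (N + 1) * (N ! : ℝ) := by
  induction N with
  | zero => simp [aCh]
  | succ n ih =>
    rw [aCh_succ_succ]
    simp only [Int.reduceSub, ih, aCh_zero_zero,
      aCh_eq_zero_of_neg_right, Int.reduceLT, Nat.factorial_succ]
    push_cast
    ring

theorem aCh_zero_one (N : ℕ) (x : ℝ) : aCh (N + 1) 0 1 x = (-1) ^ N * (N ! : ℝ) * x := by
  induction N with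
  | zero => simp [aCh]
  | succ n ih =>
    rw [aCh_succ_succ]
    simp only [Int.reduceSub, ih, aCh_zero_zero,
      aCh_eq_zero_of_neg_left, Int.reduceLT, Nat.factorial_succ]
    push_cast
    ring

theorem aCh_two_zero (N : ℕ) (x : ℝ) :
    aCh (N + 1) 2 0 x = 2 * (-1) ^ (N + 1) * (N ! : ℝ) * (genHarmonic N 1 : ℝ) := by
  induction N with
  | zero => simp [aCh, genHarmonic]
  | succ n ih =>
    rw [aCh_succ_succ]
    simp only [Int.reduceSub, ih, aCh_one_zero,
      aCh_eq_zero_of_neg_right, Int.reduceLT, Nat.factorial_succ]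
    push_cast [genHarmonic_one_succ]
    field_simp
    ring

theorem aCh_one_one (N : ℕ) (x : ℝ) :
    aCh (N + 1) 1 1 x = 2 * (-1) ^ N * (N ! : ℝ) * (genHarmonic N 1 : ℝ) * x := by
  induction N with
  | zero => simp [aCh, genHarmonic]
  | succ n ih =>
    rw [aCh_succ_succ]
    simp only [Int.reduceSub, ih, aCh_one_zero, aCh_zero_one, Nat.factorial_succ]
    push_cast [genHarmonic_one_succ]
    field_simp
    ring

theorem aCh_two_one_general (N : ℕ) (x : ℝ) :
    aCh (N + 1) 2 1 x
      = 6 * x * (-1 : ℝ) ^ N * (Nat.factorial N : ℝ) * (genHarmonic N 2 : ℝ) := by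
  induction N with
  | zero => simp [aCh, genHarmonic]
  | succ n ih =>
    rw [aCh_succ_succ]
    simp only [Int.reduceSub, ih, aCh_one_one, aCh_two_zero, Nat.factorial_succ]
    push_cast [genHarmonic_two_succ]
    field_simp
    ring

/-- For `N ≥ 2`, `a_{2,1}(N+1,x) = 6·x·(-1)^N·N!·H_{N,2}`. -/
theorem aCh_two_one (N : ℕ) (hN : 2 ≤ N) (x : ℝ) :
    aCh (N + 1) 2 1 x
      = 6 * x * (-1 : ℝ) ^ N * (Nat.factorial N : ℝ) * (genHarmonic N 2 : ℝ) :=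
  aCh_two_one_general N x
end
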